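/- Fix an integer a ≥ 2 and let x ∈ (0, a − 1) be a rational number all of whose partial quotients in its canonical continued fraction expansion are ≤ a − 1 (so that x + 1 ∈ (0, a) also has all partial quotients ≤ a − 1). Then ν^+(1 + x) = 1 + ν^+(x) and ν^−(1 + x) = 1 + ν^−(x). -/
import Mathlib


/-- One step of the Gauss continued-fraction algorithm (returns `0` upon termination). -/
noncomputable def cfStep (y : ℝ) : ℝ := if Int.fract y = 0 then 0 else (Int.fract y)⁻¹

/-- Iterates of the Gauss map used to compute the canonical continued fraction of `x`. -/
noncomputable def cfIter (x : ℝ) : ℕ → ℝ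
  | 0 => x
  | n + 1 => cfStep (cfIter x n)

/-- The `n`-th partial quotient of the canonical continued fraction expansion of `x`
(by convention it is `0` past the end of a finite expansion). -/
noncomputable def pquot (x : ℝ) (n : ℕ) : ℤ := ⌊cfIter x n⌋

/-- Value of a finite continued fraction `[a₀; a₁, …, aₙ]`. -/
noncomputable def cfEval : List ℤ → ℝ
  | [] => 0
  | [a] => (a : ℝ)
  | a :: l => (a : ℝ) + (cfEval l)⁻¹

/-- The canonical continued fraction expansion of `x` is exactly `[A 0; A 1, …, A n]`. -/
def IsCanonCF (x : ℝ) (A : ℕ → ℤ) (n : ℕ) : Prop :=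
  (∀ i ≤ n, pquot x i = A i) ∧ Int.fract (cfIter x n) = 0 ∧ ∀ i < n, Int.fract (cfIter x i) ≠ 0

/-- The `n`-th convergent `pₙ/qₙ = [x₀; x₁, …, xₙ]` of `x`. -/
noncomputable def cfConv (x : ℝ) (n : ℕ) : ℝ := cfEval ((List.range (n + 1)).map (pquot x))

open scoped Classical in
/-- The resolution map `r_a`: truncate the canonical continued fraction expansion just
before the first partial quotient `xᵢ` (`i ≥ 1`) with `xᵢ ≥ a`; identity otherwise. -/
noncomputable def ra (a : ℕ) (x : ℝ) : ℝ :=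
  if h : ∃ i, 1 ≤ i ∧ (a : ℤ) ≤ pquot x i then
    cfEval ((List.range (Nat.find h)).map (pquot x))
  else x

/-- The locking zone `Z_a(r) = {x ∈ [0, a) : r_a(x) = r}`. -/
noncomputable def lockZone (a : ℕ) (r : ℝ) : Set ℝ :=
  {x | x ∈ Set.Ico (0 : ℝ) (a : ℝ) ∧ ra a x = r}

/-- Right boundary `ν⁺` of a locking zone. -/
noncomputable def nuPlus (a : ℕ) (r : ℝ) : ℝ := sSup (lockZone a r)

/-- Left boundary `ν⁻` of a locking zone. -/
noncomputable def nuMinus (a : ℕ) (r : ℝ) : ℝ := sInf (lockZone a r)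

/- ### Auxiliary lemmas -/

lemma cfEval_cons (b : ℤ) (l : List ℤ) (hl : l ≠ []) :
    cfEval (b :: l) = (b : ℝ) + (cfEval l)⁻¹ := by
  cases l with
  | nil => exact absurd rfl hl
  | cons c m => rfl

lemma one_le_cfEval (l : List ℤ) (hl : l ≠ []) (hb : ∀ b ∈ l, 1 ≤ b) : 1 ≤ cfEval l := by
  induction l with
  | nil => exact absurd rfl hl
  | cons b m ih =>
    rcases eq_or_ne m [] with rfl | hm
    · have : (1:ℤ) ≤ b := hb b (by simp)
      simp only [cfEval]
      exact_mod_cast this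
    · rw [cfEval_cons b m hm]
      have h1 : (1:ℝ) ≤ cfEval m := ih hm fun c hc => hb c (List.mem_cons_of_mem _ hc)
      have hb1 : (1:ℝ) ≤ (b:ℝ) := by exact_mod_cast hb b (by simp)
      have : (0:ℝ) ≤ (cfEval m)⁻¹ := inv_nonneg.2 (le_trans zero_le_one h1)
      linarith

lemma cfStep_zero : cfStep 0 = 0 := by simp [cfStep]

lemma cfIter_eq_zero {x : ℝ} {n m : ℕ} (h : cfIter x n = 0) (hnm : n ≤ m) :
    cfIter x m = 0 := by
  induction m with
  | zero => simpa [Nat.le_zero.mp hnm] using h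
  | succ k ih =>
    rcases Nat.lt_or_ge n (k+1) with hlt | hge
    · have := ih (Nat.lt_succ_iff.mp hlt)
      simp [cfIter, this, cfStep_zero]
    · have : n = k + 1 := le_antisymm hnm hge
      simpa [this] using h

lemma one_le_pquot {a : ℕ} (ha : 2 ≤ a) {y : ℝ}
    (h : ∃ i, 1 ≤ i ∧ (a : ℤ) ≤ pquot y i) {i : ℕ} (hi : 1 ≤ i) (hif : i ≤ Nat.find h) :
    1 ≤ pquot y i := by
  set N := Nat.find h with hN
  have hspec : (a : ℤ) ≤ pquot y N := (Nat.find_spec h).2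
  have hNne : cfIter y N ≠ 0 := by
    intro h0
    have : (a : ℤ) ≤ ⌊(0:ℝ)⌋ := by rw [← h0]; exact hspec
    simp at this
    omega
  obtain ⟨j, rfl⟩ : ∃ j, i = j + 1 := ⟨i - 1, by omega⟩
  have hfr : Int.fract (cfIter y j) ≠ 0 := by
    intro hf
    exact hNne (cfIter_eq_zero (by simp [cfIter, cfStep, hf]) hif)
  have h01 : 0 < Int.fract (cfIter y j) :=
    lt_of_le_of_ne (Int.fract_nonneg _) (Ne.symm hfr)
  have hlt1 : Int.fract (cfIter y j) < 1 := Int.fract_lt_one _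
  have : (1:ℝ) ≤ cfIter y (j+1) := by
    simp only [cfIter, cfStep, if_neg hfr]
    rw [le_inv_comm₀ one_pos h01]
    · linarith
  exact Int.le_floor.2 (by exact_mod_cast this)

/-- `r_a(y)` lies in `[⌊y⌋, ⌊y⌋ + 1]`. -/
lemma ra_mem_Icc (a : ℕ) (ha : 2 ≤ a) (y : ℝ) :
    (⌊y⌋ : ℝ) ≤ ra a y ∧ ra a y ≤ (⌊y⌋ : ℝ) + 1 := by
  classical
  rw [ra]
  split_ifs with h
  · set N := Nat.find h with hN
    have hN1 : 1 ≤ N := (Nat.find_spec h).1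
    obtain ⟨m, hm⟩ : ∃ m, N = m + 1 := ⟨N - 1, by omega⟩
    rw [hm, List.range_succ_eq_map, List.map_cons, List.map_map]
    rcases Nat.eq_zero_or_pos m with rfl | hmpos
    · simp only [List.range_zero, List.map_nil]
      have hv : cfEval [pquot y 0] = (⌊y⌋ : ℝ) := rfl
      rw [hv]
      exact ⟨le_refl _, by linarith⟩
    · have htne : (List.range m).map (pquot y ∘ Nat.succ) ≠ [] := by
        simp [List.range_eq_nil]; omega
      rw [cfEval_cons _ _ htne]
      have h1 : (1:ℝ) ≤ cfEval ((List.range m).map (pquot y ∘ Nat.succ)) := by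
        apply one_le_cfEval _ htne
        intro b hb
        simp only [List.mem_map, List.mem_range] at hb
        obtain ⟨j, hj, rfl⟩ := hb
        exact one_le_pquot ha h (Nat.succ_le_succ (Nat.zero_le j)) (by omega)
      have hinv0 : (0:ℝ) ≤ (cfEval ((List.range m).map (pquot y ∘ Nat.succ)))⁻¹ :=
        inv_nonneg.2 (by linarith)
      have hinv1 : (cfEval ((List.range m).map (pquot y ∘ Nat.succ)))⁻¹ ≤ 1 :=
        inv_le_one_of_one_le₀ h1
      have : pquot y 0 = ⌊y⌋ := rfl
      rw [this]
      constructor <;> linarith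
  · exact ⟨Int.floor_le y, by linarith [Int.lt_floor_add_one y]⟩

lemma cfIter_one_add (y : ℝ) {n : ℕ} (hn : 1 ≤ n) : cfIter (1 + y) n = cfIter y n := by
  induction n with
  | zero => omega
  | succ k ih =>
    rcases Nat.eq_zero_or_pos k with rfl | hk
    · show cfStep (cfIter (1+y) 0) = cfStep (cfIter y 0)
      show cfStep (1 + y) = cfStep y
      have : Int.fract (1 + y) = Int.fract y := by
        rw [show (1:ℝ) + y = ((1:ℤ):ℝ) + y by norm_num, Int.fract_intCast_add]
      simp [cfStep, this]
    · show cfStep (cfIter (1+y) k) = cfStep (cfIter y k)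
      rw [ih hk]

lemma pquot_one_add (y : ℝ) {i : ℕ} (hi : 1 ≤ i) : pquot (1 + y) i = pquot y i := by
  unfold pquot; rw [cfIter_one_add y hi]

lemma pquot_one_add_zero (y : ℝ) : pquot (1 + y) 0 = 1 + pquot y 0 := by
  unfold pquot
  show ⌊(1:ℝ) + y⌋ = 1 + ⌊y⌋
  rw [show (1:ℝ) + y = ((1:ℤ):ℝ) + y by norm_num, Int.floor_intCast_add]

lemma ra_one_add (a : ℕ) (y : ℝ) : ra a (1 + y) = 1 + ra a y := by
  classical
  have hiff : ∀ i, (1 ≤ i ∧ (a : ℤ) ≤ pquot (1 + y) i) ↔ (1 ≤ i ∧ (a : ℤ) ≤ pquot y i) := by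
    intro i
    rcases Nat.eq_zero_or_pos i with rfl | hi
    · simp
    · rw [pquot_one_add y hi]
  by_cases hq : ∃ i, 1 ≤ i ∧ (a : ℤ) ≤ pquot y i
  · have hp : ∃ i, 1 ≤ i ∧ (a : ℤ) ≤ pquot (1 + y) i := by
      obtain ⟨i, hi⟩ := hq; exact ⟨i, (hiff i).2 hi⟩
    rw [ra, ra, dif_pos hp, dif_pos hq]
    have hfind : Nat.find hp = Nat.find hq :=
      le_antisymm (Nat.find_mono fun n hn => (hiff n).2 hn)
        (Nat.find_mono fun n hn => (hiff n).1 hn)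
    rw [hfind]
    set N := Nat.find hq with hN
    have hN1 : 1 ≤ N := (Nat.find_spec hq).1
    obtain ⟨m, hm⟩ : ∃ m, N = m + 1 := ⟨N - 1, by omega⟩
    rw [hm, List.range_succ_eq_map, List.map_cons, List.map_cons, List.map_map, List.map_map]
    have htail : (List.range m).map (pquot (1 + y) ∘ Nat.succ) =
        (List.range m).map (pquot y ∘ Nat.succ) := by
      apply List.map_congr_left
      intro j _
      exact pquot_one_add y (Nat.succ_le_succ (Nat.zero_le j))
    rw [htail, pquot_one_add_zero y]
    rcases Nat.eq_zero_or_pos m with rfl | hmpos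
    · simp [cfEval]
    · have htne : (List.range m).map (pquot y ∘ Nat.succ) ≠ [] := by
        simp [List.range_eq_nil]; omega
      rw [cfEval_cons _ _ htne, cfEval_cons _ _ htne]
      push_cast
      ring
  · have hp : ¬ ∃ i, 1 ≤ i ∧ (a : ℤ) ≤ pquot (1 + y) i := by
      intro ⟨i, hi⟩; exact hq ⟨i, (hiff i).1 hi⟩
    rw [ra, ra, dif_neg hp, dif_neg hq]

lemma lockZone_one_add (a : ℕ) (ha : 2 ≤ a) (x : ℝ) (hx0 : 0 < x) (hxa : x < (a : ℝ) - 1) :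
    lockZone a (1 + x) = (fun z => 1 + z) '' lockZone a x := by
  ext y
  constructor
  · rintro ⟨⟨hy0, hya⟩, hray⟩
    have h1y : 1 ≤ y := by
      by_contra hlt
      push_neg at hlt
      have hfl : ⌊y⌋ ≤ 0 := by
        have : ⌊y⌋ < (1:ℤ) := Int.floor_lt.2 (by exact_mod_cast hlt)
        omega
      have := (ra_mem_Icc a ha y).2
      rw [hray] at this
      have : (1:ℝ) + x ≤ 1 := by
        calc (1:ℝ) + x ≤ (⌊y⌋:ℝ) + 1 := this
        _ ≤ 1 := by exact_mod_cast by omega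
      linarith
    refine ⟨y - 1, ⟨⟨by linarith, by linarith⟩, ?_⟩, by ring⟩
    have : ra a (1 + (y - 1)) = 1 + ra a (y - 1) := ra_one_add a (y - 1)
    rw [show (1:ℝ) + (y - 1) = y by ring] at this
    have := this.symm.trans hray
    linarith [this]
  · rintro ⟨z, ⟨⟨hz0, hza⟩, hraz⟩, rfl⟩
    have hfl : (⌊z⌋ : ℝ) ≤ x := hraz ▸ (ra_mem_Icc a ha z).1
    have hint : ⌊z⌋ < (a:ℤ) - 1 := by
      rw [← @Int.cast_lt ℝ]
      push_cast
      linarith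
    have hz1 : z < (a:ℝ) - 1 := by
      have h1 := Int.lt_floor_add_one z
      have h2 : ((⌊z⌋ : ℤ) : ℝ) ≤ (((a:ℤ) - 2 : ℤ) : ℝ) := Int.cast_le.2 (by omega)
      push_cast at h2
      linarith
    show 1 + z ∈ lockZone a (1 + x)
    exact ⟨⟨by linarith, by linarith⟩, by rw [ra_one_add a z, hraz]⟩

/-- `ν^±(1 + x) = 1 + ν^±(x)` for rationals `x ∈ (0, a-1)` with all
partial quotients `≤ a - 1`. -/
theorem stmt_3 (a : ℕ) (ha : 2 ≤ a) (x : ℚ) (hx0 : 0 < (x : ℝ)) (hxa : (x : ℝ) < (a : ℝ) - 1)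
    (hbd : ∀ i, 1 ≤ i → pquot (x : ℝ) i ≤ (a : ℤ) - 1) :
    nuPlus a (1 + (x : ℝ)) = 1 + nuPlus a (x : ℝ) ∧
    nuMinus a (1 + (x : ℝ)) = 1 + nuMinus a (x : ℝ) := by
  classical
  have hmem : (x : ℝ) ∈ lockZone a (x : ℝ) := by
    refine ⟨⟨le_of_lt hx0, by linarith⟩, ?_⟩
    rw [ra, dif_neg]
    rintro ⟨i, hi1, hia⟩
    have := hbd i hi1
    omega
  have hne : (lockZone a (x : ℝ)).Nonempty := ⟨_, hmem⟩
  have hbdd : BddAbove (lockZone a (x : ℝ)) := ⟨(a : ℝ), fun z hz => le_of_lt hz.1.2⟩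
  have hbddb : BddBelow (lockZone a (x : ℝ)) := ⟨0, fun z hz => hz.1.1⟩
  have himg : lockZone a (1 + (x : ℝ)) = (fun z => 1 + z) '' lockZone a (x : ℝ) :=
    lockZone_one_add a ha (x : ℝ) hx0 hxa
  have e := OrderIso.addLeft (1 : ℝ)
  constructor
  · rw [nuPlus, nuPlus, himg]
    have := (OrderIso.addLeft (1 : ℝ)).map_csSup' hne hbdd
    simp only [OrderIso.addLeft_apply] at this
    rw [← this]
  · rw [nuMinus, nuMinus, himg]
    have := (OrderIso.addLeft (1 : ℝ)).map_csInf' hne hbddb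
    simp only [OrderIso.addLeft_apply] at this
    rw [← this]
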